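/- Let w ∈ ℝ^s have i.i.d. Rademacher entries and let B ∈ ℝ^{l×s} be fixed. Then Var(‖Bw‖²) ≤ Var(‖Bg‖²) where g has i.i.d. standard Gaussian entries; explicitly, Var(‖Bw‖²) = 2(‖BᵀB‖_F² − Σ_i (BᵀB)_{ii}²) ≤ 2‖BᵀB‖_F² = Var(‖Bg‖²). -/

import Mathlib

/-!
With `A = BᵀB` one has `‖Bx‖² = ∑ᵢⱼ Aᵢⱼ xᵢ xⱼ`. For independent entries with mean `0`, variance `1`
and fourth moment `m₄`, independence factorises every fourth moment, which gives
`E[xᵢ xⱼ xₚ x_q] = δ(i,j) δ(p,q) + δ(i,p) δ(j,q) + δ(i,q) δ(j,p) + (m₄ - 3) [i = j = p = q]`,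
and hence, for symmetric `A`, `Var(∑ᵢⱼ Aᵢⱼ xᵢ xⱼ) = 2 ‖A‖_F² + (m₄ - 3) ∑ᵢ Aᵢᵢ²`.
Rademacher entries have `m₄ = 1`, standard Gaussian entries `m₄ = 3`; the Gaussian fourth moment is
the fourth derivative at `0` of its moment generating function `exp (t² / 2)`.
-/

open MeasureTheory ProbabilityTheory

def frobSq {l s : ℕ} (B : Matrix (Fin l) (Fin s) ℝ) : ℝ := ∑ i, ∑ j, (B i j) ^ 2

noncomputable def RVar {Ω : Type*} [MeasurableSpace Ω] (μ : Measure Ω) (X : Ω → ℝ) : ℝ :=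
  (∫ ω, (X ω) ^ 2 ∂μ) - (∫ ω, X ω ∂μ) ^ 2

open Finset Matrix Real

lemma Matrix.sum_sq_mulVec {ι κ : Type*} [Fintype ι] [Fintype κ] (B : Matrix κ ι ℝ)
    (v : ι → ℝ) : ∑ k, (B *ᵥ v) k ^ 2 = ∑ i, ∑ j, (Bᵀ * B) i j * (v i * v j) := by
  calc ∑ k, (B *ᵥ v) k ^ 2 = (B *ᵥ v) ⬝ᵥ (B *ᵥ v) := by simp [dotProduct, sq]
    _ = v ⬝ᵥ ((Bᵀ * B) *ᵥ v) := by
      rw [dotProduct_mulVec, ← mulVec_transpose, mulVec_mulVec, dotProduct_comm]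
    _ = ∑ i, ∑ j, (Bᵀ * B) i j * (v i * v j) := by
      rw [dot_mulVec_eq_sum_sum, sum_comm]
      exact sum_congr rfl fun i _ => sum_congr rfl fun j _ => by ring

lemma Matrix.isSymm_transpose_mul_self' {ι κ : Type*} [Fintype κ] (B : Matrix κ ι ℝ) :
    (Bᵀ * B).IsSymm := by
  simp [IsSymm, transpose_mul]

instance ENNReal.holderTriple_four_four_two : ENNReal.HolderTriple 4 4 2 where
  inv_add_inv_eq_inv := by
    rw [← two_mul, show (4 : ENNReal) = 2 * 2 by norm_num, ENNReal.mul_inv (by simp) (by simp),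
      ← mul_assoc, ENNReal.mul_inv_cancel (by simp) (by simp), one_mul]

lemma MeasureTheory.MemLp.integrable_mul_mul_mul {Ω : Type*} [MeasurableSpace Ω]
    {μ : Measure Ω} {a b c d : Ω → ℝ} (ha : MemLp a 4 μ) (hb : MemLp b 4 μ) (hc : MemLp c 4 μ)
    (hd : MemLp d 4 μ) : Integrable (fun ω => a ω * b ω * c ω * d ω) μ := by
  have hab : MemLp (fun ω => a ω * b ω) 2 μ := hb.mul' ha
  have hcd : MemLp (fun ω => c ω * d ω) 2 μ := hd.mul' hc
  exact (hab.integrable_mul hcd).congr (.of_forall fun ω => by simp [mul_assoc])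

lemma Multiset.prod_map_eq_prod_pow_count {ι M : Type*} [Fintype ι] [DecidableEq ι]
    [CommMonoid M] (s : Multiset ι) (f : ι → M) : (s.map f).prod = ∏ i, f i ^ s.count i := by
  rw [Finset.prod_multiset_map_count]
  exact prod_subset (subset_univ _)
    (fun i _ hi => by simp [Multiset.count_eq_zero_of_notMem (by simpa using hi)])

/-- Read `M r n` as the `n`-th moment of the `r`-th variable: a factor of multiplicity one
vanishes, so only the pairings of `i, j, p, q` survive. -/
lemma prod_count_quadruple_eq {ι : Type*} [DecidableEq ι] {M : ι → ℕ → ℝ} {c : ℝ}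
    (h1 : ∀ i, M i 1 = 0) (h2 : ∀ i, M i 2 = 1) (h4 : ∀ i, M i 4 = c) (i j p q : ι) :
    ∏ r ∈ ({i, j, p, q} : Multiset ι).toFinset, M r (({i, j, p, q} : Multiset ι).count r) =
      (if i = j then 1 else 0) * (if p = q then 1 else 0)
        + (if i = p then 1 else 0) * (if j = q then 1 else 0)
        + (if i = q then 1 else 0) * (if j = p then 1 else 0)
        + (if i = j ∧ j = p ∧ p = q then c - 3 else 0) := by
  by_cases hij : i = j <;> by_cases hip : i = p <;> by_cases hiq : i = q <;>
    by_cases hjp : j = p <;> by_cases hjq : j = q <;> by_cases hpq : p = q <;>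
    simp_all [Multiset.count_cons, prod_insert, @eq_comm ι]
  ring

namespace ProbabilityTheory.iIndepFun

variable {Ω ι : Type*} [MeasurableSpace Ω] {μ : Measure Ω} [Fintype ι] [DecidableEq ι]
  {X : ι → Ω → ℝ} {c : ℝ}

lemma integral_multiset_prod (hX : iIndepFun X μ)
    (hXm : ∀ i, AEMeasurable (X i) μ) (s : Multiset ι) :
    ∫ ω, (s.map (X · ω)).prod ∂μ = ∏ i ∈ s.toFinset, ∫ ω, X i ω ^ s.count i ∂μ := by
  have := hX.isProbabilityMeasure
  simp_rw [Multiset.prod_map_eq_prod_pow_count]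
  rw [hX.integral_fun_prod_comp hXm (fun i => (continuous_pow _).aestronglyMeasurable)]
  exact (prod_subset (subset_univ _)
    (fun i _ hi => by simp [Multiset.count_eq_zero_of_notMem (by simpa using hi)])).symm

lemma integral_mul_eq_ite (hX : iIndepFun X μ) (hXm : ∀ i, AEMeasurable (X i) μ)
    (h1 : ∀ i, ∫ ω, X i ω ∂μ = 0) (h2 : ∀ i, ∫ ω, X i ω ^ 2 ∂μ = 1) (i j : ι) :
    ∫ ω, X i ω * X j ω ∂μ = if i = j then 1 else 0 := by
  have h := hX.integral_multiset_prod hXm {i, j}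
  by_cases hij : i = j <;> simp_all [Multiset.count_cons, prod_insert, sq]

lemma integral_mul_mul_mul_eq_ite (hX : iIndepFun X μ) (hXm : ∀ i, AEMeasurable (X i) μ)
    (h1 : ∀ i, ∫ ω, X i ω ∂μ = 0) (h2 : ∀ i, ∫ ω, X i ω ^ 2 ∂μ = 1)
    (h4 : ∀ i, ∫ ω, X i ω ^ 4 ∂μ = c) (i j p q : ι) :
    ∫ ω, X i ω * X j ω * X p ω * X q ω ∂μ =
      (if i = j then 1 else 0) * (if p = q then 1 else 0)
        + (if i = p then 1 else 0) * (if j = q then 1 else 0)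
        + (if i = q then 1 else 0) * (if j = p then 1 else 0)
        + (if i = j ∧ j = p ∧ p = q then c - 3 else 0) :=
  calc ∫ ω, X i ω * X j ω * X p ω * X q ω ∂μ
      = ∫ ω, (({i, j, p, q} : Multiset ι).map (X · ω)).prod ∂μ := by simp [mul_assoc]
    _ = _ := hX.integral_multiset_prod hXm _
    _ = _ := prod_count_quadruple_eq (M := fun i n => ∫ ω, X i ω ^ n ∂μ)
      (by simpa using h1) h2 h4 i j p q

theorem rVar_quadForm (hX : iIndepFun X μ) (hX4 : ∀ i, MemLp (X i) 4 μ)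
    (h1 : ∀ i, ∫ ω, X i ω ∂μ = 0) (h2 : ∀ i, ∫ ω, X i ω ^ 2 ∂μ = 1)
    (h4 : ∀ i, ∫ ω, X i ω ^ 4 ∂μ = c) (A : Matrix ι ι ℝ) (hA : A.IsSymm) :
    RVar μ (fun ω => ∑ i, ∑ j, A i j * (X i ω * X j ω)) =
      2 * ∑ i, ∑ j, A i j ^ 2 + (c - 3) * ∑ i, A i i ^ 2 := by
  have := hX.isProbabilityMeasure
  have hXm : ∀ i, AEMeasurable (X i) μ := fun i => (hX4 i).aestronglyMeasurable.aemeasurable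
  have hX2 : ∀ i, MemLp (X i) 2 μ := fun i => (hX4 i).mono_exponent (by norm_num)
  have hint2 : ∀ i j, Integrable (fun ω => X i ω * X j ω) μ :=
    fun i j => (hX2 i).integrable_mul (hX2 j)
  have hint4 : ∀ i j p q, Integrable (fun ω => X i ω * X j ω * X p ω * X q ω) μ :=
    fun i j p q => (hX4 i).integrable_mul_mul_mul (hX4 j) (hX4 p) (hX4 q)
  have hmean : ∫ ω, ∑ i, ∑ j, A i j * (X i ω * X j ω) ∂μ = ∑ i, A i i := by
    simp (disch := intros; fun_prop) only [integral_finsetSum, integral_const_mul,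
      hX.integral_mul_eq_ite hXm h1 h2]
    simp
  have hsq : ∀ ω, (∑ i, ∑ j, A i j * (X i ω * X j ω)) ^ 2 =
      ∑ i, ∑ j, ∑ p, ∑ q, A i j * A p q * (X i ω * X j ω * X p ω * X q ω) := by
    intro ω
    rw [sq, sum_mul_sum]
    refine sum_congr rfl fun i _ => ?_
    rw [sum_comm]
    simp only [sum_mul_sum]
    exact sum_congr rfl fun j _ => sum_congr rfl fun p _ => sum_congr rfl fun q _ => by ring
  have hsecond : ∫ ω, (∑ i, ∑ j, A i j * (X i ω * X j ω)) ^ 2 ∂μ =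
      (∑ i, A i i) ^ 2 + 2 * ∑ i, ∑ j, A i j ^ 2 + (c - 3) * ∑ i, A i i ^ 2 := by
    simp_rw [hsq]
    simp (disch := intros; fun_prop) only [integral_finsetSum, integral_const_mul,
      hX.integral_mul_mul_mul_eq_ite hXm h1 h2 h4]
    simp [mul_add, sum_add_distrib, ite_and, sq, sum_mul_sum, hA.apply, ← sum_mul]
    ring
  rw [RVar, hsecond, hmean]
  ring

theorem rVar_sum_sq_mulVec {κ : Type*} [Fintype κ] (hX : iIndepFun X μ)
    (hX4 : ∀ i, MemLp (X i) 4 μ) (h1 : ∀ i, ∫ ω, X i ω ∂μ = 0)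
    (h2 : ∀ i, ∫ ω, X i ω ^ 2 ∂μ = 1) (h4 : ∀ i, ∫ ω, X i ω ^ 4 ∂μ = c) (B : Matrix κ ι ℝ) :
    RVar μ (fun ω => ∑ k, (B *ᵥ (X · ω)) k ^ 2) =
      2 * ∑ i, ∑ j, (Bᵀ * B) i j ^ 2 + (c - 3) * ∑ i, (Bᵀ * B) i i ^ 2 := by
  simp_rw [sum_sq_mulVec]
  exact hX.rVar_quadForm hX4 h1 h2 h4 _ (isSymm_transpose_mul_self' B)

end ProbabilityTheory.iIndepFun

def IsRademacher {Ω : Type*} [MeasurableSpace Ω] (f : Ω → ℝ) (μ : Measure Ω) : Prop :=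
  μ {ω | f ω = 1} = 1 / 2 ∧ μ {ω | f ω = -1} = 1 / 2

namespace IsRademacher

variable {Ω : Type*} [MeasurableSpace Ω] {μ : Measure Ω} [IsProbabilityMeasure μ] {f : Ω → ℝ}

lemma ae_eq_one_or_eq_neg_one (hf : Measurable f) (h : IsRademacher f μ) :
    ∀ᵐ ω ∂μ, f ω = 1 ∨ f ω = -1 := by
  have hS : MeasurableSet {ω | f ω = 1 ∨ f ω = -1} :=
    (hf (measurableSet_singleton 1)).union (hf (measurableSet_singleton (-1)))
  have hdisj : Disjoint {ω | f ω = 1} {ω | f ω = -1} :=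
    Set.disjoint_left.2 fun ω (h1 : f ω = 1) (h2 : f ω = -1) => by norm_num [h1] at h2
  rw [ae_iff, ← Set.compl_ofPred, prob_compl_eq_zero_iff hS, Set.ofPred_or,
    measure_union hdisj (hf (measurableSet_singleton (-1))), h.1, h.2, ENNReal.add_halves]

lemma memLp (hf : Measurable f) (h : IsRademacher f μ) (p : ENNReal) : MemLp f p μ := by
  refine MemLp.of_bound hf.aestronglyMeasurable 1 ?_
  filter_upwards [h.ae_eq_one_or_eq_neg_one hf] with ω hω
  rcases hω with hω | hω <;> simp [hω]

lemma integral_eq_zero (hf : Measurable f) (h : IsRademacher f μ) : ∫ ω, f ω ∂μ = 0 := by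
  have hS : MeasurableSet {ω | f ω = 1} := hf (measurableSet_singleton 1)
  have hf' : f =ᵐ[μ] fun ω => {ω | f ω = 1}.indicator (fun _ => (2 : ℝ)) ω - 1 := by
    filter_upwards [h.ae_eq_one_or_eq_neg_one hf] with ω hω
    rcases hω with hω | hω <;> norm_num [hω, Set.indicator]
  rw [integral_congr_ae hf', integral_sub ((integrable_const _).indicator hS) (integrable_const _),
    integral_indicator_const _ hS, measureReal_def, h.1]
  norm_num

lemma integral_pow_of_even (hf : Measurable f) (h : IsRademacher f μ) {n : ℕ} (hn : Even n) :
    ∫ ω, f ω ^ n ∂μ = 1 := by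
  have hpow : (fun ω => f ω ^ n) =ᵐ[μ] 1 := by
    filter_upwards [h.ae_eq_one_or_eq_neg_one hf] with ω hω
    rcases hω with hω | hω <;> simp [hω, hn.neg_one_pow]
  simp [integral_congr_ae hpow]

end IsRademacher

lemma deriv_mul_exp_half_sq {p p' : ℝ → ℝ} (hp : ∀ t, HasDerivAt p (p' t) t) :
    deriv (fun t => p t * exp (t ^ 2 / 2)) = fun t => (p' t + t * p t) * exp (t ^ 2 / 2) := by
  funext t
  have he : HasDerivAt (fun t => exp (t ^ 2 / 2)) (exp (t ^ 2 / 2) * t) t := by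
    simpa using ((hasDerivAt_pow 2 t).div_const 2).exp
  exact ((hp t).fun_mul he).deriv.trans (by ring)

lemma integral_pow_gaussianReal_eq_iteratedDeriv (n : ℕ) :
    ∫ x, x ^ n ∂gaussianReal 0 1 = iteratedDeriv n (fun t => exp (t ^ 2 / 2)) 0 := by
  have h := iteratedDeriv_mgf_zero (X := fun x : ℝ => x) (μ := gaussianReal 0 1) (by simp) n
  rw [mgf_fun_id_gaussianReal] at h
  simpa using h.symm

lemma integral_sq_gaussianReal : ∫ x, x ^ 2 ∂gaussianReal 0 1 = 1 := by
  have h := variance_fun_id_gaussianReal (μ := 0) (v := 1)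
  rw [variance_eq_integral measurable_id'.aemeasurable] at h
  simpa using h

lemma integral_pow_four_gaussianReal : ∫ x, x ^ 4 ∂gaussianReal 0 1 = 3 := by
  have d1 : deriv (fun t => exp (t ^ 2 / 2)) = fun t => t * exp (t ^ 2 / 2) := by
    simpa using deriv_mul_exp_half_sq (fun t => hasDerivAt_const t (1 : ℝ))
  have d2 : deriv (fun t => t * exp (t ^ 2 / 2)) = fun t => (1 + t ^ 2) * exp (t ^ 2 / 2) := by
    rw [deriv_mul_exp_half_sq hasDerivAt_id']
    ring_nf
  have d3 : deriv (fun t => (1 + t ^ 2) * exp (t ^ 2 / 2)) =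
      fun t => (3 * t + t ^ 3) * exp (t ^ 2 / 2) := by
    rw [deriv_mul_exp_half_sq fun t => (hasDerivAt_pow 2 t).const_add 1]
    ring_nf
  have d4 : deriv (fun t => (3 * t + t ^ 3) * exp (t ^ 2 / 2)) =
      fun t => (3 + 6 * t ^ 2 + t ^ 4) * exp (t ^ 2 / 2) := by
    rw [deriv_mul_exp_half_sq fun t =>
      ((hasDerivAt_id' t).const_mul 3).fun_add (hasDerivAt_pow 3 t)]
    ring_nf
  rw [integral_pow_gaussianReal_eq_iteratedDeriv, iteratedDeriv_eq_iterate]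
  simp [d1, d2, d3, d4]

namespace ProbabilityTheory.HasLaw

variable {Ω : Type*} [MeasurableSpace Ω] {μ : Measure Ω} {ν : Measure ℝ} {f : Ω → ℝ}

lemma memLp_of_memLp_id (hf : HasLaw f ν μ) {p : ENNReal} (h : MemLp id p ν) : MemLp f p μ := by
  rw [← hf.map_eq, memLp_map_measure_iff aestronglyMeasurable_id hf.aemeasurable] at h
  exact h

lemma integral_pow (hf : HasLaw f ν μ) (n : ℕ) : ∫ ω, f ω ^ n ∂μ = ∫ x, x ^ n ∂ν :=
  hf.integral_comp (f := fun x => x ^ n) (continuous_pow n).aestronglyMeasurable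

end ProbabilityTheory.HasLaw

theorem stmt17_general {Ω₁ Ω₂ : Type*} [MeasurableSpace Ω₁] [MeasurableSpace Ω₂]
    (μ : Measure Ω₁) [IsProbabilityMeasure μ] (ν : Measure Ω₂)
    {l s : ℕ} (B : Matrix (Fin l) (Fin s) ℝ)
    (w : Ω₁ → Fin s → ℝ) (g : Ω₂ → Fin s → ℝ)
    (hwmeas : ∀ i, Measurable fun ω => w ω i)
    (hwindep : iIndepFun (fun i ω => w ω i) μ)
    (hwdist : ∀ i, μ {ω | w ω i = 1} = 1 / 2 ∧ μ {ω | w ω i = -1} = 1 / 2)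
    (hgindep : iIndepFun (fun i ω => g ω i) ν)
    (hgdist : ∀ i, Measure.map (fun ω => g ω i) ν = gaussianReal 0 1) :
    RVar μ (fun ω => ∑ k, (B.mulVec (w ω) k) ^ 2) =
        2 * (frobSq (B.transpose * B) - ∑ i, ((B.transpose * B) i i) ^ 2) ∧
      RVar ν (fun ω => ∑ k, (B.mulVec (g ω) k) ^ 2) = 2 * frobSq (B.transpose * B) ∧
      RVar μ (fun ω => ∑ k, (B.mulVec (w ω) k) ^ 2) ≤
        RVar ν (fun ω => ∑ k, (B.mulVec (g ω) k) ^ 2) := by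
  have hwR : ∀ i, IsRademacher (fun ω => w ω i) μ := hwdist
  have hw : RVar μ (fun ω => ∑ k, (B *ᵥ w ω) k ^ 2) =
      2 * frobSq (Bᵀ * B) + (1 - 3) * ∑ i, (Bᵀ * B) i i ^ 2 :=
    hwindep.rVar_sum_sq_mulVec (fun i => (hwR i).memLp (hwmeas i) 4)
      (fun i => (hwR i).integral_eq_zero (hwmeas i))
      (fun i => (hwR i).integral_pow_of_even (hwmeas i) even_two)
      (fun i => (hwR i).integral_pow_of_even (hwmeas i) (by decide)) B
  have hgLaw : ∀ i, HasLaw (fun ω => g ω i) (gaussianReal 0 1) ν := fun i =>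
    ⟨.of_map_ne_zero (by rw [hgdist i]; exact IsProbabilityMeasure.ne_zero _), hgdist i⟩
  have hg : RVar ν (fun ω => ∑ k, (B *ᵥ g ω) k ^ 2) =
      2 * frobSq (Bᵀ * B) + (3 - 3) * ∑ i, (Bᵀ * B) i i ^ 2 :=
    hgindep.rVar_sum_sq_mulVec (fun i => (hgLaw i).memLp_of_memLp_id (memLp_id_gaussianReal 4))
      (fun i => by simpa using (hgLaw i).integral_pow 1)
      (fun i => ((hgLaw i).integral_pow 2).trans integral_sq_gaussianReal)
      (fun i => ((hgLaw i).integral_pow 4).trans integral_pow_four_gaussianReal) B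
  have hdiag : 0 ≤ ∑ i, (Bᵀ * B) i i ^ 2 := sum_nonneg fun i _ => sq_nonneg _
  exact ⟨by rw [hw]; ring, by rw [hg]; ring, by rw [hw, hg]; linarith⟩

/-- The Hutchinson (Rademacher) estimator `‖Bw‖²` of `‖B‖_F²` has variance
`2(‖BᵀB‖_F² - ∑ᵢ (BᵀB)ᵢᵢ²)`, which is at most the variance `2‖BᵀB‖_F²` of the Gaussian
estimator `‖Bg‖²`. -/
theorem stmt17 {Ω₁ Ω₂ : Type*} [MeasurableSpace Ω₁] [MeasurableSpace Ω₂]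
    (μ : Measure Ω₁) [IsProbabilityMeasure μ] (ν : Measure Ω₂) [IsProbabilityMeasure ν]
    {l s : ℕ} (B : Matrix (Fin l) (Fin s) ℝ)
    (w : Ω₁ → Fin s → ℝ) (g : Ω₂ → Fin s → ℝ)
    (hwmeas : ∀ i, Measurable fun ω => w ω i)
    (hwindep : iIndepFun (fun i ω => w ω i) μ)
    (hwdist : ∀ i, μ {ω | w ω i = 1} = 1 / 2 ∧ μ {ω | w ω i = -1} = 1 / 2)
    (hgmeas : ∀ i, Measurable fun ω => g ω i)
    (hgindep : iIndepFun (fun i ω => g ω i) ν)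
    (hgdist : ∀ i, Measure.map (fun ω => g ω i) ν = gaussianReal 0 1) :
    RVar μ (fun ω => ∑ k, (B.mulVec (w ω) k) ^ 2) =
        2 * (frobSq (B.transpose * B) - ∑ i, ((B.transpose * B) i i) ^ 2) ∧
      RVar ν (fun ω => ∑ k, (B.mulVec (g ω) k) ^ 2) = 2 * frobSq (B.transpose * B) ∧
      RVar μ (fun ω => ∑ k, (B.mulVec (w ω) k) ^ 2) ≤
        RVar ν (fun ω => ∑ k, (B.mulVec (g ω) k) ^ 2) :=
  stmt17_general μ ν B w g hwmeas hwindep hwdist hgindep hgdist
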